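/- arXiv:2401.16987 — 2 statements merged into one kernel-verified Lean document; each statement's English description precedes it below -/
import Mathlib

section
/- Let v : ℝ → ℝ and let w : ℝ → ℝ be locally integrable, and assume v(b) - v(a) = ∫_a^b w(t) dt for all real a ≤ b. Then for every Lebesgue-null set M ⊆ ℝ, the set { t ∈ ℝ : v(t) ∈ M and w(t) ≠ 0 } is Lebesgue-null. -/
/-!
Almost everywhere `v` is differentiable with `v' = w` (Lebesgue differentiation). Near a point `t`
with `v'(t) ≠ 0` we have `|x - t| ≤ K |v x - v t|`; grouping such points by `K` and by the radius
on which this holds, and cutting into pieces of small diameter, the set `{v ∈ M, v' ≠ 0}` becomes a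
countable union of sets on which `v` has a Lipschitz inverse. Each piece is the Lipschitz image of
a subset of the null set `M`, hence null, since Lebesgue measure is `1`-dimensional Hausdorff
measure.
-/

open MeasureTheory Set Filter Metric
open scoped Topology ENNReal NNReal

section HausdorffNull

variable {X Y : Type*} [EMetricSpace X] [EMetricSpace Y] [MeasurableSpace X] [BorelSpace X]
  [MeasurableSpace Y] [BorelSpace Y] {f : X → Y} {s : Set X} {d : ℝ}

theorem hausdorffMeasure_eq_zero_of_antilipschitzWith_domRestrict {K : ℝ≥0}
    (hf : AntilipschitzWith K (s.domRestrict f)) (hd : 0 ≤ d) (h : μH[d] (f '' s) = 0) :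
    μH[d] s = 0 := by
  have key := hf.le_hausdorffMeasure_image hd univ
  rw [image_univ, range_domRestrict, h, mul_zero, nonpos_iff_eq_zero] at key
  rw [← Subtype.range_coe (s := s), ← image_univ,
    isometry_subtype_coe.hausdorffMeasure_image (Or.inl hd), key]

end HausdorffNull

section LocallyAntilipschitz

variable {X Y : Type*} [MetricSpace X] [MetricSpace Y] [MeasurableSpace X] [BorelSpace X]
  [MeasurableSpace Y] [BorelSpace Y] [SecondCountableTopology X] {f : X → Y} {s : Set X} {d : ℝ}

theorem hausdorffMeasure_eq_zero_of_forall_eventually_dist_le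
    (hf : ∀ x ∈ s, ∃ K : ℝ, ∀ᶠ y in 𝓝 x, dist y x ≤ K * dist (f y) (f x)) (hd : 0 ≤ d)
    (h : μH[d] (f '' s) = 0) : μH[d] s = 0 := by
  set piece : ℕ → Set X := fun n =>
    {x ∈ s | ∀ y, dist y x < (n + 1 : ℝ)⁻¹ → dist y x ≤ n * dist (f y) (f x)}
  have hcover : s ⊆ ⋃ n, piece n := by
    intro x hx
    obtain ⟨K, hK⟩ := hf x hx
    obtain ⟨ε, hε, hball⟩ := Metric.eventually_nhds_iff.1 hK
    obtain ⟨n₁, hn₁⟩ := exists_nat_ge K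
    obtain ⟨n₂, hn₂⟩ := exists_nat_one_div_lt hε
    refine mem_iUnion.2 ⟨max n₁ n₂, hx, fun y hy => (hball ?_).trans ?_⟩
    · refine hy.trans (lt_of_le_of_lt ?_ (one_div (n₂ + 1 : ℝ) ▸ hn₂))
      gcongr
      exact_mod_cast le_max_right n₁ n₂
    · gcongr
      exact hn₁.trans (by exact_mod_cast le_max_left n₁ n₂)
  refine measure_mono_null hcover (measure_iUnion_null fun n => ?_)
  refine measure_null_of_locally_null _ fun x _ =>
    ⟨piece n ∩ ball x ((n + 1 : ℝ)⁻¹ / 2),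
      inter_mem_nhdsWithin _ (ball_mem_nhds x (by positivity)),
      hausdorffMeasure_eq_zero_of_antilipschitzWith_domRestrict (K := n) ?_ hd
        (measure_mono_null (image_mono (inter_subset_left.trans (sep_subset _ _))) h)⟩
  refine AntilipschitzWith.of_le_mul_dist fun ⟨y, hy⟩ ⟨z, hz⟩ => hz.1.2 y ?_
  calc dist y z ≤ dist y x + dist z x := dist_triangle_right y z x
    _ < (n + 1 : ℝ)⁻¹ / 2 + (n + 1 : ℝ)⁻¹ / 2 := add_lt_add hy.2 hz.2
    _ = (n + 1 : ℝ)⁻¹ := add_halves _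

end LocallyAntilipschitz

theorem hausdorffMeasure_eq_zero_of_hasDerivAt {𝕜 F : Type*} [NontriviallyNormedField 𝕜]
    [NormedAddCommGroup F] [NormedSpace 𝕜 F] [MeasurableSpace 𝕜] [BorelSpace 𝕜]
    [SecondCountableTopology 𝕜] [MeasurableSpace F] [BorelSpace F] {f f' : 𝕜 → F} {s : Set 𝕜}
    {d : ℝ} (hf : ∀ x ∈ s, HasDerivAt f (f' x) x) (hf' : ∀ x ∈ s, f' x ≠ 0) (hd : 0 ≤ d)
    (h : μH[d] (f '' s) = 0) : μH[d] s = 0 := by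
  refine hausdorffMeasure_eq_zero_of_forall_eventually_dist_le (fun x hx => ?_) hd h
  have hpair : Tendsto (fun y => (y, x)) (𝓝 x) (𝓝 x ×ˢ pure x) :=
    tendsto_id.prodMk tendsto_const_pure
  obtain ⟨K, hK⟩ := (((hf x hx).isTheta_sub (hf' x hx)).isBigO_symm.comp_tendsto hpair).bound
  exact ⟨K, by simpa only [dist_eq_norm, Function.comp_def] using hK⟩

theorem ae_hasDerivAt_of_sub_eq_intervalIntegral {E : Type*} [NormedAddCommGroup E]
    [NormedSpace ℝ E] [CompleteSpace E] {v w : ℝ → E} (hw : LocallyIntegrable w volume)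
    (hftc : ∀ a b : ℝ, a ≤ b → v b - v a = ∫ t in a..b, w t) :
    ∀ᵐ t, HasDerivAt v (w t) t := by
  have hv : v = fun x => v 0 + ∫ t in 0..x, w t := by
    funext x
    rcases le_total 0 x with hx | hx
    · rw [← hftc 0 x hx, add_sub_cancel]
    · rw [intervalIntegral.integral_symm, ← hftc x 0 hx, neg_sub, add_sub_cancel]
  filter_upwards [_root_.LocallyIntegrable.ae_hasDerivAt_integral hw] with t ht
  rw [hv]
  exact (ht 0).const_add _

/-- De la Vallée-Poussin's lemma: a locally absolutely continuous function `v`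
(with a.e. derivative `w`) has vanishing derivative a.e. on the preimage of a null set. -/
theorem stmt8 (v w : ℝ → ℝ)
    (hw : LocallyIntegrable w volume)
    (hftc : ∀ a b : ℝ, a ≤ b → v b - v a = ∫ t in a..b, w t)
    (M : Set ℝ) (hM : volume M = 0) :
    volume {t : ℝ | v t ∈ M ∧ w t ≠ 0} = 0 := by
  have hderiv : volume {t | HasDerivAt v (w t) t}ᶜ = 0 :=
    ae_hasDerivAt_of_sub_eq_intervalIntegral hw hftc
  rw [← measure_inter_conull hderiv, ← hausdorffMeasure_real]
  refine hausdorffMeasure_eq_zero_of_hasDerivAt (fun t ht => ht.2) (fun t ht => ht.1.2)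
    zero_le_one ?_
  rw [hausdorffMeasure_real]
  exact measure_mono_null (image_subset_iff.2 fun t ht => ht.1.1) hM
end

section
/- Let u₁, u₂ : ℝ → ℝ be measurable functions with u₁(t) = u₂(t) for Lebesgue-almost every t ∈ ℝ. Let v : ℝ → ℝ and let w : ℝ → ℝ be locally integrable with v(b) - v(a) = ∫_a^b w(t) dt for all real a ≤ b. Then u₁(v(t))·w(t) = u₂(v(t))·w(t) for Lebesgue-almost every t ∈ ℝ. -/
/-!
By Lebesgue differentiation, `v` has derivative `w` almost everywhere, so it suffices that the set
of points where `v' = w ≠ 0` and `u₁ (v t) ≠ u₂ (v t)` is null. Where the derivative is invertible,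
`v` is, on each of countably many pieces, uniformly close to an invertible linear map and hence
antilipschitz there; an antilipschitz map pulls Hausdorff-null sets back to Hausdorff-null sets, and
on `ℝ` the measure `μH[1]` is Lebesgue measure.
-/

open MeasureTheory Set
open scoped NNReal

namespace ApproximatesLinearOn

variable {𝕜 E F : Type*} [NontriviallyNormedField 𝕜] [NormedAddCommGroup E] [NormedSpace 𝕜 E]
  [MeasurableSpace E] [BorelSpace E] [NormedAddCommGroup F] [NormedSpace 𝕜 F]
  [MeasurableSpace F] [BorelSpace F]

theorem hausdorffMeasure_inter_preimage_eq_zero {f : E → F} {f' : E ≃L[𝕜] F} {s : Set E}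
    {c : ℝ≥0} (hf : ApproximatesLinearOn f (f' : E →L[𝕜] F) s c)
    (hc : Subsingleton E ∨ c < ‖(f'.symm : F →L[𝕜] E)‖₊⁻¹) {d : ℝ} (hd : 0 ≤ d) {t : Set F}
    (ht : μH[d] t = 0) : μH[d] (s ∩ f ⁻¹' t) = 0 := by
  have hpre : μH[d] (s.domRestrict f ⁻¹' t) = 0 :=
    le_antisymm (((hf.antilipschitz hc).hausdorffMeasure_preimage_le hd t).trans (by simp [ht]))
      bot_le
  rw [← isometry_subtype_coe.hausdorffMeasure_image (Or.inl hd)] at hpre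
  rwa [← Subtype.image_preimage_coe]

end ApproximatesLinearOn

section

variable {E F : Type*} [NormedAddCommGroup E] [NormedSpace ℝ E] [FiniteDimensional ℝ E]
  [MeasurableSpace E] [BorelSpace E] [NormedAddCommGroup F] [NormedSpace ℝ F]
  [SecondCountableTopology F] [MeasurableSpace F] [BorelSpace F]

theorem hausdorffMeasure_inter_preimage_eq_zero_of_hasFDerivWithinAt {f : E → F} {s : Set E}
    {f' : E → E →L[ℝ] F} (hf' : ∀ x ∈ s, HasFDerivWithinAt f (f' x) s x)
    (hinv : ∀ x ∈ s, (f' x).IsInvertible) {d : ℝ} (hd : 0 ≤ d) {t : Set F}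
    (ht : μH[d] t = 0) : μH[d] (s ∩ f ⁻¹' t) = 0 := by
  rcases s.eq_empty_or_nonempty with rfl | hs
  · simp
  -- The precision `(2‖A⁻¹‖ + 1)⁻¹` is below `‖A⁻¹‖⁻¹`, which makes `f` antilipschitz on each piece.
  obtain ⟨u, A, -, hsu, hA, hAf'⟩ := exists_closed_cover_approximatesLinearOn_of_hasFDerivWithinAt
    f s f' hf' (fun B => (2 * ‖B.inverse‖₊ + 1)⁻¹) (fun B => by positivity)
  have hpiece (n : ℕ) : μH[d] ((s ∩ u n) ∩ f ⁻¹' t) = 0 := by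
    obtain ⟨y, hy, hAy⟩ := hAf' hs n
    obtain ⟨B, hB⟩ := hinv y hy
    have hAn := hA n
    rw [hAy, ← hB, ContinuousLinearMap.inverse_equiv] at hAn
    refine hAn.hausdorffMeasure_inter_preimage_eq_zero ?_ hd ht
    rcases eq_or_ne ‖(B.symm : F →L[ℝ] E)‖₊ 0 with h0 | h0
    · left
      refine subsingleton_of_forall_eq 0 fun e => ?_
      rw [← B.symm_apply_apply e, ← ContinuousLinearEquiv.coe_coe, nnnorm_eq_zero.1 h0]
      rfl
    · right
      rw [inv_lt_inv₀ (by positivity) (pos_iff_ne_zero.2 h0)]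
      linarith [pos_iff_ne_zero.2 h0]
  refine measure_mono_null (fun x hx => ?_) (measure_iUnion_null hpiece)
  obtain ⟨n, hn⟩ := mem_iUnion.1 (hsu hx.1)
  exact mem_iUnion.2 ⟨n, ⟨hx.1, hn⟩, hx.2⟩

end

theorem Real.volume_inter_preimage_eq_zero_of_hasDerivWithinAt {f f' : ℝ → ℝ} {s t : Set ℝ}
    (hf : ∀ x ∈ s, HasDerivWithinAt f (f' x) s x) (hf' : ∀ x ∈ s, f' x ≠ 0)
    (ht : volume t = 0) : volume (s ∩ f ⁻¹' t) = 0 := by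
  rw [← hausdorffMeasure_real] at ht ⊢
  refine hausdorffMeasure_inter_preimage_eq_zero_of_hasFDerivWithinAt
    (fun x hx => (hf x hx).hasFDerivWithinAt) (fun x hx => ?_) zero_le_one ht
  exact ⟨ContinuousLinearEquiv.unitsEquivAut ℝ (Units.mk0 _ (hf' x hx)), by ext; simp⟩

theorem ae_hasDerivAt_of_sub_eq_integral {v w : ℝ → ℝ} (hw : LocallyIntegrable w volume)
    (hvw : ∀ a b : ℝ, a ≤ b → v b - v a = ∫ t in a..b, w t) :
    ∀ᵐ x, HasDerivAt v (w x) x := by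
  have hv : v = fun x => v 0 + ∫ t in (0 : ℝ)..x, w t := by
    ext x
    rcases le_total 0 x with hx | hx
    · linarith [hvw 0 x hx]
    · linarith [hvw x 0 hx, intervalIntegral.integral_symm (μ := volume) (f := w) 0 x]
  filter_upwards [LocallyIntegrable.ae_hasDerivAt_integral hw] with x hx
  rw [hv]
  exact (hx 0).const_add (v 0)

theorem stmt9_general (u₁ u₂ : ℝ → ℝ)
    (hu : u₁ =ᵐ[volume] u₂)
    (v w : ℝ → ℝ) (hw : LocallyIntegrable w volume)
    (hftc : ∀ a b : ℝ, a ≤ b → v b - v a = ∫ t in a..b, w t) :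
    (fun t => u₁ (v t) * w t) =ᵐ[volume] (fun t => u₂ (v t) * w t) := by
  have hnull : volume ({x | HasDerivAt v (w x) x ∧ w x ≠ 0} ∩ v ⁻¹' {y | u₁ y ≠ u₂ y}) = 0 :=
    Real.volume_inter_preimage_eq_zero_of_hasDerivWithinAt
      (fun x hx => hx.1.hasDerivWithinAt) (fun x hx => hx.2) (ae_iff.1 hu)
  filter_upwards [ae_hasDerivAt_of_sub_eq_integral hw hftc, measure_eq_zero_iff_ae_notMem.1 hnull]
    with x hvx hx
  by_cases hux : u₁ (v x) = u₂ (v x)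
  · rw [hux]
  · have hwx : w x = 0 := by_contra fun hwx => hx ⟨⟨hvx, hwx⟩, hux⟩
    rw [hwx, mul_zero, mul_zero]

/-- If `u₁ = u₂` a.e. and `v` is locally absolutely continuous with a.e. derivative `w`,
then `(u₁∘v)·w = (u₂∘v)·w` a.e.. -/
theorem stmt9 (u₁ u₂ : ℝ → ℝ) (hu₁ : Measurable u₁) (hu₂ : Measurable u₂)
    (hu : u₁ =ᵐ[volume] u₂)
    (v w : ℝ → ℝ) (hw : LocallyIntegrable w volume)
    (hftc : ∀ a b : ℝ, a ≤ b → v b - v a = ∫ t in a..b, w t) :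
    (fun t => u₁ (v t) * w t) =ᵐ[volume] (fun t => u₂ (v t) * w t) :=
  stmt9_general u₁ u₂ hu v w hw hftc
end
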